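/- arXiv:1704.00785 — 2 statements merged into one kernel-verified Lean document; each statement's English description precedes it below -/
import Mathlib

section
/- Let a be an n×n complex matrix and let L(ρ) = −i[H,ρ] + Σ_μ D_{L_μ}(ρ) + D_a(ρ) be a Lindblad generator (including the dissipator D_a) whose restriction to the subspace of traceless matrices is injective, and let ρ̄ be a density matrix with L(ρ̄) = 0. Set Y = ρ̄a† − tr(ρ̄a†)ρ̄ (which is traceless). Then the unique traceless matrix X with L(X) = Y satisfies ker(ρ̄) ⊆ ker(X). -/
open scoped Matrix ComplexOrder

/-- The dissipator `D_X(ρ) = XρX† − (1/2)(X†Xρ + ρX†X)`. -/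
noncomputable def dissipator {n : ℕ} (X ρ : Matrix (Fin n) (Fin n) ℂ) :
    Matrix (Fin n) (Fin n) ℂ :=
  X * ρ * Xᴴ - (1 / 2 : ℂ) • (Xᴴ * X * ρ + ρ * (Xᴴ * X))

/-!
For `v ∈ ker ρ̄`, stationarity gives `0 = ⟪v, L(ρ̄) v⟫ = Σ_μ ⟪L_μ† v, ρ̄ L_μ† v⟫`, so positivity of
`ρ̄` makes `ker ρ̄` invariant under every `L_μ†`, including `a†`. Consequently, for every `ρ` that
kills `ker ρ̄` and every `v ∈ ker ρ̄`, `L(ρ) v = ρ K v` with `K = iH − ½ Σ_μ L_μ†L_μ`. Taking `ρ = ρ̄`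
shows that `ker ρ̄` is `K`-invariant as well, so `L` maps the space of traceless matrices killing
`ker ρ̄` into itself. Being injective there, `L` maps it onto itself; `Y` lies in it, hence so does
the unique traceless preimage `X`.
-/

theorem Submodule.mem_of_apply_mem_of_injOn {K V : Type*} [Field K] [AddCommGroup V]
    [Module K V] [FiniteDimensional K V] (f : V →ₗ[K] V) {p q : Submodule K V}
    (hmaps : ∀ x ∈ p, f x ∈ p) (hinj : Set.InjOn f q) (hpq : p ≤ q)
    {x : V} (hx : x ∈ q) (hfx : f x ∈ p) : x ∈ p := by
  have hsurj : Function.Surjective (f.restrict hmaps) :=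
    LinearMap.injective_iff_surjective.mp fun y z h =>
      Subtype.ext (hinj (hpq y.2) (hpq z.2) (congrArg Subtype.val h))
  obtain ⟨y, hy⟩ := hsurj ⟨f x, hfx⟩
  have hfy : f y = f x := congrArg Subtype.val hy
  exact hinj (hpq y.2) hx hfy ▸ y.2

namespace Matrix

variable {m R : Type*} [Fintype m] [CommRing R]

def vanishingOnKer (A : Matrix m m R) : Submodule R (Matrix m m R) where
  carrier := {ρ | ∀ v, A *ᵥ v = 0 → ρ *ᵥ v = 0}
  add_mem' hρ hσ v hv := by rw [add_mulVec, hρ v hv, hσ v hv, add_zero]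
  zero_mem' v _ := zero_mulVec v
  smul_mem' c ρ hρ v hv := by rw [smul_mulVec, hρ v hv, smul_zero]

theorem IsHermitian.star_dotProduct_mulVec_eq_zero [StarRing R] {ρ : Matrix m m R}
    (hρ : ρ.IsHermitian) {v : m → R} (hv : ρ *ᵥ v = 0) (w : m → R) : star v ⬝ᵥ ρ *ᵥ w = 0 := by
  rw [dotProduct_mulVec, ← hρ.eq, ← star_mulVec, hv, star_zero, zero_dotProduct]

end Matrix

open Matrix

section Lindblad

variable {n : ℕ} {ι : Type*} [Fintype ι]

theorem dissipator_add (X ρ σ : Matrix (Fin n) (Fin n) ℂ) :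
    dissipator X (ρ + σ) = dissipator X ρ + dissipator X σ := by
  simp only [dissipator, Matrix.mul_add, Matrix.add_mul, smul_add]
  abel

theorem dissipator_smul (X ρ : Matrix (Fin n) (Fin n) ℂ) (c : ℂ) :
    dissipator X (c • ρ) = c • dissipator X ρ := by
  simp only [dissipator, Matrix.mul_smul, Matrix.smul_mul, smul_add, smul_sub, smul_comm c]

theorem trace_dissipator (X ρ : Matrix (Fin n) (Fin n) ℂ) : (dissipator X ρ).trace = 0 := by
  simp only [dissipator, trace_sub, trace_smul, trace_add, smul_eq_mul]
  rw [trace_mul_cycle X ρ Xᴴ, trace_mul_comm ρ (Xᴴ * X)]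
  ring

noncomputable def lindbladian (H : Matrix (Fin n) (Fin n) ℂ) (J : ι → Matrix (Fin n) (Fin n) ℂ) :
    Module.End ℂ (Matrix (Fin n) (Fin n) ℂ) where
  toFun ρ := (-Complex.I) • (H * ρ - ρ * H) + ∑ μ, dissipator (J μ) ρ
  map_add' ρ σ := by
    simp only [dissipator_add, Finset.sum_add_distrib, Matrix.mul_add, Matrix.add_mul, smul_add,
      smul_sub]
    abel
  map_smul' c ρ := by
    simp only [dissipator_smul, ← Finset.smul_sum, Matrix.mul_smul, Matrix.smul_mul, smul_add,
      smul_sub, smul_comm c, RingHom.id_apply]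

theorem lindbladian_apply (H : Matrix (Fin n) (Fin n) ℂ) (J : ι → Matrix (Fin n) (Fin n) ℂ)
    (ρ : Matrix (Fin n) (Fin n) ℂ) :
    lindbladian H J ρ = (-Complex.I) • (H * ρ - ρ * H) + ∑ μ, dissipator (J μ) ρ := rfl

theorem trace_lindbladian (H : Matrix (Fin n) (Fin n) ℂ) (J : ι → Matrix (Fin n) (Fin n) ℂ)
    (ρ : Matrix (Fin n) (Fin n) ℂ) : (lindbladian H J ρ).trace = 0 := by
  simp [lindbladian_apply, trace_sum, trace_dissipator, trace_mul_comm H ρ]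

theorem star_dotProduct_dissipator_mulVec (X : Matrix (Fin n) (Fin n) ℂ)
    {ρ : Matrix (Fin n) (Fin n) ℂ} (hρ : ρ.IsHermitian) {v : Fin n → ℂ} (hv : ρ *ᵥ v = 0) :
    star v ⬝ᵥ dissipator X ρ *ᵥ v = star (Xᴴ *ᵥ v) ⬝ᵥ ρ *ᵥ (Xᴴ *ᵥ v) := by
  simp only [dissipator, sub_mulVec, add_mulVec, smul_mulVec, ← mulVec_mulVec, hv, mulVec_zero,
    dotProduct_sub, dotProduct_smul, dotProduct_add, hρ.star_dotProduct_mulVec_eq_zero hv,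
    add_zero, dotProduct_zero, smul_zero, sub_zero]
  rw [dotProduct_mulVec, star_mulVec, conjTranspose_conjTranspose, ← dotProduct_mulVec]

theorem star_dotProduct_lindbladian_mulVec (H : Matrix (Fin n) (Fin n) ℂ)
    (J : ι → Matrix (Fin n) (Fin n) ℂ) {ρ : Matrix (Fin n) (Fin n) ℂ} (hρ : ρ.IsHermitian)
    {v : Fin n → ℂ} (hv : ρ *ᵥ v = 0) :
    star v ⬝ᵥ lindbladian H J ρ *ᵥ v = ∑ μ, star ((J μ)ᴴ *ᵥ v) ⬝ᵥ ρ *ᵥ ((J μ)ᴴ *ᵥ v) := by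
  simp only [lindbladian_apply, add_mulVec, smul_mulVec, sub_mulVec, sum_mulVec, ← mulVec_mulVec,
    hv, mulVec_zero, dotProduct_add, dotProduct_smul, dotProduct_sub, dotProduct_sum,
    hρ.star_dotProduct_mulVec_eq_zero hv, star_dotProduct_dissipator_mulVec _ hρ hv, sub_zero,
    dotProduct_zero, smul_zero, zero_add]

theorem Matrix.PosSemidef.mulVec_conjTranspose_mulVec_eq_zero_of_lindbladian_eq_zero
    {H : Matrix (Fin n) (Fin n) ℂ} {J : ι → Matrix (Fin n) (Fin n) ℂ}
    {ρ : Matrix (Fin n) (Fin n) ℂ} (hρ : ρ.PosSemidef) (hstat : lindbladian H J ρ = 0)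
    {v : Fin n → ℂ} (hv : ρ *ᵥ v = 0) (μ : ι) : ρ *ᵥ ((J μ)ᴴ *ᵥ v) = 0 := by
  have hsum := star_dotProduct_lindbladian_mulVec H J hρ.isHermitian hv
  rw [hstat, zero_mulVec, dotProduct_zero, eq_comm,
    Finset.sum_eq_zero_iff_of_nonneg fun μ _ => hρ.dotProduct_mulVec_nonneg _] at hsum
  exact (hρ.dotProduct_mulVec_zero_iff _).mp (hsum μ (Finset.mem_univ μ))

theorem dissipator_mulVec (X : Matrix (Fin n) (Fin n) ℂ) {ρ : Matrix (Fin n) (Fin n) ℂ}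
    {v : Fin n → ℂ} (hv : ρ *ᵥ v = 0) (hXv : ρ *ᵥ (Xᴴ *ᵥ v) = 0) :
    dissipator X ρ *ᵥ v = -((1 / 2 : ℂ) • ρ *ᵥ ((Xᴴ * X) *ᵥ v)) := by
  simp only [dissipator, sub_mulVec, add_mulVec, smul_mulVec, ← mulVec_mulVec, hv, hXv,
    mulVec_zero, zero_add, zero_sub]

theorem lindbladian_mulVec (H : Matrix (Fin n) (Fin n) ℂ) (J : ι → Matrix (Fin n) (Fin n) ℂ)
    {ρ : Matrix (Fin n) (Fin n) ℂ} {v : Fin n → ℂ} (hv : ρ *ᵥ v = 0)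
    (hJv : ∀ μ, ρ *ᵥ ((J μ)ᴴ *ᵥ v) = 0) :
    lindbladian H J ρ *ᵥ v
      = ρ *ᵥ ((Complex.I • H - (1 / 2 : ℂ) • ∑ μ, (J μ)ᴴ * J μ) *ᵥ v) := by
  simp only [lindbladian_apply, add_mulVec, smul_mulVec, sub_mulVec, sum_mulVec,
    dissipator_mulVec _ hv (hJv _), ← mulVec_mulVec, hv, mulVec_zero, mulVec_sub, mulVec_smul,
    mulVec_sum, Finset.sum_neg_distrib, Finset.smul_sum]
  module

theorem lindbladian_mem_vanishingOnKer {H : Matrix (Fin n) (Fin n) ℂ}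
    {J : ι → Matrix (Fin n) (Fin n) ℂ} {ρbar ρ : Matrix (Fin n) (Fin n) ℂ}
    (hpsd : ρbar.PosSemidef) (hstat : lindbladian H J ρbar = 0) (hρ : ρ ∈ vanishingOnKer ρbar) :
    lindbladian H J ρ ∈ vanishingOnKer ρbar := by
  intro v hv
  have hJv := hpsd.mulVec_conjTranspose_mulVec_eq_zero_of_lindbladian_eq_zero hstat hv
  have hKv := lindbladian_mulVec H J hv hJv
  rw [hstat, zero_mulVec] at hKv
  rw [lindbladian_mulVec H J (hρ v hv) fun μ => hρ _ (hJv μ), hρ _ hKv.symm]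

end Lindblad

theorem stmt5_general {n m : ℕ} (a : Matrix (Fin n) (Fin n) ℂ)
    (L : Matrix (Fin n) (Fin n) ℂ → Matrix (Fin n) (Fin n) ℂ)
    (H : Matrix (Fin n) (Fin n) ℂ)
    (Lop : Fin m → Matrix (Fin n) (Fin n) ℂ)
    (hL : ∀ ρ, L ρ = (-Complex.I) • (H * ρ - ρ * H) + ∑ μ, dissipator (Lop μ) ρ
      + dissipator a ρ)
    (hinj : ∀ X Y : Matrix (Fin n) (Fin n) ℂ,
      X.trace = 0 → Y.trace = 0 → L X = L Y → X = Y)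
    (ρbar : Matrix (Fin n) (Fin n) ℂ) (hpsd : ρbar.PosSemidef) (htr : ρbar.trace = 1)
    (hstat : L ρbar = 0)
    (X : Matrix (Fin n) (Fin n) ℂ) (hXtr : X.trace = 0)
    (hX : L X = ρbar * aᴴ - (ρbar * aᴴ).trace • ρbar) :
    ∀ v : Fin n → ℂ, ρbar.mulVec v = 0 → X.mulVec v = 0 := by
  let J : Option (Fin m) → Matrix (Fin n) (Fin n) ℂ := fun μ => μ.elim a Lop
  have hLJ : L = lindbladian H J := funext fun ρ => by
    rw [hL, lindbladian_apply, Fintype.sum_option, add_assoc, add_comm (∑ μ, dissipator (Lop μ) ρ)]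
    rfl
  subst hLJ
  let traceless : Submodule ℂ (Matrix (Fin n) (Fin n) ℂ) :=
    LinearMap.ker (traceLinearMap (Fin n) ℂ ℂ)
  have hY : ρbar * aᴴ - (ρbar * aᴴ).trace • ρbar ∈ traceless ⊓ vanishingOnKer ρbar := by
    refine ⟨?_, fun v hv => ?_⟩
    · simp [traceless, htr]
    · rw [sub_mulVec, smul_mulVec, hv, smul_zero, sub_zero, ← mulVec_mulVec]
      exact hpsd.mulVec_conjTranspose_mulVec_eq_zero_of_lindbladian_eq_zero hstat hv none
  exact (Submodule.mem_of_apply_mem_of_injOn (lindbladian H J) (q := traceless)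
    (fun ρ hρ => Submodule.mem_inf.2
      ⟨trace_lindbladian H J ρ, lindbladian_mem_vanishingOnKer hpsd hstat hρ.2⟩)
    (fun ρ hρ σ hσ => hinj ρ σ hρ hσ) inf_le_left hXtr (hX ▸ hY)).2

/-- let `L(ρ) = −i[H,ρ] + Σ_μ D_{L_μ}(ρ) + D_a(ρ)` be a Lindblad generator
whose restriction to traceless matrices is injective, `ρ̄` a density matrix with
`L(ρ̄) = 0`, and `Y = ρ̄a† − tr(ρ̄a†)ρ̄`. Then the (unique) traceless `X` with
`L(X) = Y` satisfies `ker ρ̄ ⊆ ker X`. -/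
theorem stmt5 {n m : ℕ} (a : Matrix (Fin n) (Fin n) ℂ)
    (L : Matrix (Fin n) (Fin n) ℂ → Matrix (Fin n) (Fin n) ℂ)
    (H : Matrix (Fin n) (Fin n) ℂ) (hH : H.IsHermitian)
    (Lop : Fin m → Matrix (Fin n) (Fin n) ℂ)
    (hL : ∀ ρ, L ρ = (-Complex.I) • (H * ρ - ρ * H) + ∑ μ, dissipator (Lop μ) ρ
      + dissipator a ρ)
    (hinj : ∀ X Y : Matrix (Fin n) (Fin n) ℂ,
      X.trace = 0 → Y.trace = 0 → L X = L Y → X = Y)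
    (ρbar : Matrix (Fin n) (Fin n) ℂ) (hpsd : ρbar.PosSemidef) (htr : ρbar.trace = 1)
    (hstat : L ρbar = 0)
    (X : Matrix (Fin n) (Fin n) ℂ) (hXtr : X.trace = 0)
    (hX : L X = ρbar * aᴴ - (ρbar * aᴴ).trace • ρbar) :
    ∀ v : Fin n → ℂ, ρbar.mulVec v = 0 → X.mulVec v = 0 :=
  stmt5_general a L H Lop hL hinj ρbar hpsd htr hstat X hXtr hX
end

section
/- Let A_1,…,A_m and F_1,…,F_m be n_A×n_A complex matrices, B_1,…,B_m be n_B×n_B complex matrices, ρ̄ a Hermitian n_A×n_A matrix, and ρ_s any n_B×n_B matrix. Assume H = Σ_{k=1}^m A_k ⊗ B_k† is Hermitian. Define M = Σ_{k=1}^m F_k ⊗ B_k† and K₁ = −i M (ρ̄ ⊗ ρ_s) + i (ρ̄ ⊗ ρ_s) M†, and define the m×m matrices X and Y by X_{k,j} = tr( F_j ρ̄ A_k† + A_j ρ̄ F_k† ) and Y_{k,j} = (1/(2i)) tr( F_j ρ̄ A_k† − A_j ρ̄ F_k† ). Then X and Y are Hermitian, and tr_A( −i[ H, K₁ ] ) =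 −i [ Σ_{k,j} Y_{k,j} B_k B_j†, ρ_s ] + Σ_{k,j} X_{k,j} ( B_j† ρ_s B_k − (1/2)( B_k B_j† ρ_s + ρ_s B_k B_j† ) ). -/
open scoped Matrix Kronecker

/-- Partial trace over the first tensor factor:
`(tr_A M)_{j,j'} = Σ_i M_{(i,j),(i,j')}`. -/
noncomputable def ptraceA {nA nB : ℕ}
    (M : Matrix (Fin nA × Fin nB) (Fin nA × Fin nB) ℂ) :
    Matrix (Fin nB) (Fin nB) ℂ :=
  fun j j' => ∑ i, M (i, j) (i, j')


lemma kron_conjT {n p : ℕ} (X : Matrix (Fin n) (Fin n) ℂ) (Y : Matrix (Fin p) (Fin p) ℂ) :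
    (X ⊗ₖ Y)ᴴ = Xᴴ ⊗ₖ Yᴴ := by
  ext ⟨i, j⟩ ⟨i', j'⟩
  simp [Matrix.conjTranspose_apply, Matrix.kroneckerMap_apply, star_mul']

lemma ptraceA_kron {nA nB : ℕ} (X : Matrix (Fin nA) (Fin nA) ℂ)
    (Y : Matrix (Fin nB) (Fin nB) ℂ) : ptraceA (X ⊗ₖ Y) = X.trace • Y := by
  ext j j'
  simp [ptraceA, Matrix.trace, Matrix.diag, Finset.sum_mul, Matrix.kroneckerMap_apply]

lemma ptraceA_add {nA nB : ℕ} (P Q : Matrix (Fin nA × Fin nB) (Fin nA × Fin nB) ℂ) :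
    ptraceA (P + Q) = ptraceA P + ptraceA Q := by
  ext j j'; simp [ptraceA, Finset.sum_add_distrib]

lemma ptraceA_neg {nA nB : ℕ} (P : Matrix (Fin nA × Fin nB) (Fin nA × Fin nB) ℂ) :
    ptraceA (-P) = -ptraceA P := by
  ext j j'; simp [ptraceA]

lemma ptraceA_sub {nA nB : ℕ} (P Q : Matrix (Fin nA × Fin nB) (Fin nA × Fin nB) ℂ) :
    ptraceA (P - Q) = ptraceA P - ptraceA Q := by
  ext j j'; simp [ptraceA, Finset.sum_sub_distrib]

lemma ptraceA_sum {nA nB : ℕ} {ι : Type*} (s : Finset ι)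
    (P : ι → Matrix (Fin nA × Fin nB) (Fin nA × Fin nB) ℂ) :
    ptraceA (∑ i ∈ s, P i) = ∑ i ∈ s, ptraceA (P i) := by
  ext j j'
  simp only [ptraceA, Matrix.sum_apply]
  exact Finset.sum_comm

lemma hI2 : (1 / (2 * Complex.I) : ℂ) = -Complex.I / 2 := by
  rw [one_div, mul_inv, Complex.inv_I]; ring

lemma per_term {n : ℕ} (t1 t2 : ℂ) (P Q S : Matrix (Fin n) (Fin n) ℂ) :
    -(t1 • P) + t2 • S + (t1 • S - t2 • Q)
      = (-Complex.I) • (((1 / (2 * Complex.I)) * (t1 - t2)) • P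
          - ((1 / (2 * Complex.I)) * (t1 - t2)) • Q)
        + (t1 + t2) • (S - (1 / 2 : ℂ) • (P + Q)) := by
  have h : (-Complex.I) * ((1 / (2 * Complex.I)) * (t1 - t2)) = -(t1 - t2) / 2 := by
    rw [hI2]
    rw [show (-Complex.I) * (-Complex.I / 2 * (t1 - t2))
        = Complex.I * Complex.I * ((t1 - t2) / 2) from by ring, Complex.I_mul_I]
    ring
  rw [smul_sub, smul_smul, smul_smul, h]
  module

/-- with `H = Σ_k A_k ⊗ B_k†` Hermitian, `M = Σ_k F_k ⊗ B_k†`,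
`K₁ = −i M(ρ̄⊗ρ_s) + i (ρ̄⊗ρ_s)M†`, `X_{k,j} = tr(F_j ρ̄ A_k† + A_j ρ̄ F_k†)` and
`Y_{k,j} = (1/(2i)) tr(F_j ρ̄ A_k† − A_j ρ̄ F_k†)`, the matrices `X, Y` are Hermitian and
`tr_A(−i[H,K₁]) = −i[Σ_{k,j} Y_{k,j} B_k B_j†, ρ_s]
  + Σ_{k,j} X_{k,j} (B_j† ρ_s B_k − (1/2)(B_k B_j† ρ_s + ρ_s B_k B_j†))`. -/
theorem stmt12 {nA nB m : ℕ}
    (A F : Fin m → Matrix (Fin nA) (Fin nA) ℂ)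
    (B : Fin m → Matrix (Fin nB) (Fin nB) ℂ)
    (ρbar : Matrix (Fin nA) (Fin nA) ℂ) (hρ : ρbar.IsHermitian)
    (ρs : Matrix (Fin nB) (Fin nB) ℂ)
    (hHherm : (∑ k, A k ⊗ₖ (B k)ᴴ).IsHermitian) :
    (Matrix.of fun k j : Fin m =>
        (F j * ρbar * (A k)ᴴ + A j * ρbar * (F k)ᴴ).trace).IsHermitian ∧
    (Matrix.of fun k j : Fin m =>
        (1 / (2 * Complex.I)) * (F j * ρbar * (A k)ᴴ - A j * ρbar * (F k)ᴴ).trace).IsHermitian ∧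
    ptraceA ((-Complex.I) • ((∑ k, A k ⊗ₖ (B k)ᴴ)
          * ((-Complex.I) • ((∑ k, F k ⊗ₖ (B k)ᴴ) * (ρbar ⊗ₖ ρs))
            + Complex.I • ((ρbar ⊗ₖ ρs) * (∑ k, F k ⊗ₖ (B k)ᴴ)ᴴ))
        - ((-Complex.I) • ((∑ k, F k ⊗ₖ (B k)ᴴ) * (ρbar ⊗ₖ ρs))
            + Complex.I • ((ρbar ⊗ₖ ρs) * (∑ k, F k ⊗ₖ (B k)ᴴ)ᴴ))
          * (∑ k, A k ⊗ₖ (B k)ᴴ)))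
      = (-Complex.I) • ((∑ k, ∑ j, ((1 / (2 * Complex.I))
              * (F j * ρbar * (A k)ᴴ - A j * ρbar * (F k)ᴴ).trace) • (B k * (B j)ᴴ)) * ρs
          - ρs * (∑ k, ∑ j, ((1 / (2 * Complex.I))
              * (F j * ρbar * (A k)ᴴ - A j * ρbar * (F k)ᴴ).trace) • (B k * (B j)ᴴ)))
        + ∑ k, ∑ j, (F j * ρbar * (A k)ᴴ + A j * ρbar * (F k)ᴴ).trace
            • ((B j)ᴴ * ρs * B k
              - (1 / 2 : ℂ) • (B k * (B j)ᴴ * ρs + ρs * (B k * (B j)ᴴ))) := by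
  have hstar : ∀ (k j : Fin m), star ((F j * ρbar * (A k)ᴴ).trace)
      = (A k * ρbar * (F j)ᴴ).trace := by
    intro k j
    rw [← Matrix.trace_conjTranspose]
    simp [Matrix.conjTranspose_mul, hρ.eq, Matrix.mul_assoc]
  have hstar2 : ∀ (k j : Fin m), star ((A k * ρbar * (F j)ᴴ).trace)
      = (F j * ρbar * (A k)ᴴ).trace := by
    intro k j; rw [← hstar k j, star_star]
  refine ⟨?_, ?_, ?_⟩
  · rw [Matrix.IsHermitian]
    ext k j
    simp only [Matrix.conjTranspose_apply, Matrix.of_apply, Matrix.trace_add, star_add, hstar, hstar2]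
    exact add_comm _ _
  · rw [Matrix.IsHermitian]
    ext k j
    simp only [Matrix.conjTranspose_apply, Matrix.of_apply, Matrix.trace_sub, star_mul',
      star_sub, hstar, hstar2]
    rw [show star (1 / (2 * Complex.I) : ℂ) = -(1 / (2 * Complex.I)) from by
      simp [hI2, div_eq_mul_inv, Complex.star_def, Complex.conj_I]]
    ring
  · set H := ∑ k, A k ⊗ₖ (B k)ᴴ with hHdef
    set M := ∑ k, F k ⊗ₖ (B k)ᴴ with hMdef
    have hHH : Hᴴ = ∑ k, (A k)ᴴ ⊗ₖ B k := by
      rw [hHdef, Matrix.conjTranspose_sum]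
      simp [kron_conjT]
    have hMH : Mᴴ = ∑ k, (F k)ᴴ ⊗ₖ B k := by
      rw [hMdef, Matrix.conjTranspose_sum]
      simp [kron_conjT]
    have step1 : (-Complex.I) • (H * ((-Complex.I) • (M * (ρbar ⊗ₖ ρs))
            + Complex.I • ((ρbar ⊗ₖ ρs) * Mᴴ))
          - ((-Complex.I) • (M * (ρbar ⊗ₖ ρs)) + Complex.I • ((ρbar ⊗ₖ ρs) * Mᴴ)) * H)
        = (-(Hᴴ * (M * (ρbar ⊗ₖ ρs))) + H * ((ρbar ⊗ₖ ρs) * Mᴴ))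
          + ((M * (ρbar ⊗ₖ ρs)) * Hᴴ - ((ρbar ⊗ₖ ρs) * Mᴴ) * H) := by
      rw [hHherm.eq]
      simp only [Matrix.mul_add, Matrix.add_mul, Matrix.mul_smul, Matrix.smul_mul,
        smul_smul, smul_sub, smul_add]
      simp only [neg_mul, mul_neg, Complex.I_mul_I, neg_neg, one_smul, neg_smul]
      abel
    rw [step1, ptraceA_add, ptraceA_add, ptraceA_neg, ptraceA_sub]
    have T1 : ptraceA (Hᴴ * (M * (ρbar ⊗ₖ ρs)))
        = ∑ k, ∑ j, ((A k)ᴴ * (F j * ρbar)).trace • (B k * ((B j)ᴴ * ρs)) := by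
      rw [hHH, hMdef]
      simp only [Finset.sum_mul, Finset.mul_sum, ← Matrix.mul_kronecker_mul,
        ptraceA_sum, ptraceA_kron]
      exact Finset.sum_comm
    have T2 : ptraceA (H * ((ρbar ⊗ₖ ρs) * Mᴴ))
        = ∑ k, ∑ j, (A j * (ρbar * (F k)ᴴ)).trace • ((B j)ᴴ * (ρs * B k)) := by
      rw [hHdef, hMH]
      simp only [Finset.sum_mul, Finset.mul_sum, ← Matrix.mul_kronecker_mul,
        ptraceA_sum, ptraceA_kron]
    have T3 : ptraceA ((M * (ρbar ⊗ₖ ρs)) * Hᴴ)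
        = ∑ k, ∑ j, ((F j * ρbar) * (A k)ᴴ).trace • (((B j)ᴴ * ρs) * B k) := by
      rw [hHH, hMdef]
      simp only [Finset.sum_mul, Finset.mul_sum, ← Matrix.mul_kronecker_mul,
        ptraceA_sum, ptraceA_kron]
    have T4 : ptraceA (((ρbar ⊗ₖ ρs) * Mᴴ) * H)
        = ∑ k, ∑ j, ((ρbar * (F k)ᴴ) * A j).trace • ((ρs * B k) * (B j)ᴴ) := by
      rw [hHdef, hMH]
      simp only [Finset.sum_mul, Finset.mul_sum, ← Matrix.mul_kronecker_mul,
        ptraceA_sum, ptraceA_kron]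
      exact Finset.sum_comm
    rw [T1, T2, T3, T4]
    -- normalize traces
    have htr1 : ∀ (k j : Fin m), ((A k)ᴴ * (F j * ρbar)).trace
        = (F j * ρbar * (A k)ᴴ).trace := fun k j => Matrix.trace_mul_comm _ _
    have htr2 : ∀ (k j : Fin m), (A j * (ρbar * (F k)ᴴ)).trace
        = (A j * ρbar * (F k)ᴴ).trace := fun k j => by rw [Matrix.mul_assoc]
    have htr4 : ∀ (k j : Fin m), ((ρbar * (F k)ᴴ) * A j).trace
        = (A j * ρbar * (F k)ᴴ).trace := fun k j => by
      rw [Matrix.trace_mul_comm, Matrix.mul_assoc]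
    simp only [htr1, htr2, htr4]
    -- push RHS operations into the double sums, merge everything
    simp only [Finset.sum_mul, Finset.mul_sum, Matrix.smul_mul, Matrix.mul_smul,
      smul_sub, Finset.smul_sum, ← Finset.sum_sub_distrib, ← Finset.sum_add_distrib,
      ← Finset.sum_neg_distrib]
    refine Finset.sum_congr rfl fun k _ => Finset.sum_congr rfl fun j _ => ?_
    have hc : ∀ t : ℂ, (-Complex.I) * (1 / (2 * Complex.I) * t) = -(t / 2) := by
      intro t
      rw [hI2, show (-Complex.I) * (-Complex.I / 2 * t)
        = Complex.I * Complex.I * (t / 2) from by ring, Complex.I_mul_I]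
      ring
    simp only [Matrix.mul_assoc, Matrix.trace_add, Matrix.trace_sub, smul_sub, smul_add,
      smul_smul, hc]
    module
end
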